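/- A nonzero homogeneous linear map P : A_α → A_α is a Nijenhuis operator on A_α if and only if either P = r·id_{A_α} for some r ∈ ℂ∖{0}, or P(x) = s·y and P(y) = 0 for some s ∈ ℂ∖{0}. (Consequently, the homogeneous Nijenhuis operators on A_α are identified, with respect to the basis {x,y}, with the matrices of the form (r, 0; s, r) having rs = 0.) -/
import Mathlib


open scoped TensorProduct

/-- A skew-symmetric bicharacter of an abelian group `G` over a field `k`. -/
structure Bicharacter (G : Type*) (k : Type*) [AddCommGroup G] [Field k] where
  ε : G → G → k
  ne_zero : ∀ a b : G, ε a b ≠ 0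
  add_left : ∀ a b c : G, ε (a + b) c = ε a c * ε b c
  add_right : ∀ a b c : G, ε a (b + c) = ε a b * ε a c
  skew : ∀ a b : G, ε a b * ε b a = 1

/-- `(A, 𝒜, μ)` is a left-symmetric color algebra over `k` with respect to the
skew-symmetric bicharacter `ε`: the grading `𝒜` is an internal direct sum
decomposition of `A`, the multiplication `μ` respects the grading, and the
left-symmetric color identity holds on homogeneous elements. -/
structure IsLSCA {G k A : Type*} [AddCommGroup G] [DecidableEq G] [Field k]
    [AddCommGroup A] [Module k A]
    (ε : Bicharacter G k) (𝒜 : G → Submodule k A) (μ : A →ₗ[k] A →ₗ[k] A) : Prop where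
  internal : DirectSum.IsInternal 𝒜
  graded_mul : ∀ a b : G, ∀ x ∈ 𝒜 a, ∀ y ∈ 𝒜 b, μ x y ∈ 𝒜 (a + b)
  left_symm : ∀ a b c : G, ∀ x ∈ 𝒜 a, ∀ y ∈ 𝒜 b, ∀ z ∈ 𝒜 c,
    μ (μ x y) z - μ x (μ y z) = ε.ε a b • (μ (μ y x) z - μ y (μ x z))

/-- `P` is a Nijenhuis operator on the left-symmetric color algebra `A`, homogeneous
of degree `c`:  `P(x)P(y) = ε(|P|+|x|,|P|) P(P(x)y) + P(x P(y)) − ε(|x|,|P|) P(P(xy))`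
for all homogeneous `x, y`. -/
def IsNijenhuisOp {G k A : Type*} [AddCommGroup G] [Field k] [AddCommGroup A] [Module k A]
    (ε : Bicharacter G k) (𝒜 : G → Submodule k A) (μ : A →ₗ[k] A →ₗ[k] A)
    (c : G) (P : A →ₗ[k] A) : Prop :=
  (∀ a : G, ∀ x ∈ 𝒜 a, P x ∈ 𝒜 (a + c)) ∧
  ∀ a b : G, ∀ x ∈ 𝒜 a, ∀ y ∈ 𝒜 b,
    μ (P x) (P y)
      = ε.ε (c + a) c • P (μ (P x) y) + P (μ x (P y)) - ε.ε a c • P (P (μ x y))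

/-- `P` is a Rota-Baxter operator of weight `lam` on the left-symmetric color algebra
`A`, homogeneous of degree `c`:
`P(x)P(y) = ε(|P|+|x|,|P|) P(P(x)y) + P(x P(y)) + lam·P(xy)` for all homogeneous
`x, y`. -/
def IsRotaBaxterOp {G k A : Type*} [AddCommGroup G] [Field k] [AddCommGroup A] [Module k A]
    (ε : Bicharacter G k) (𝒜 : G → Submodule k A) (μ : A →ₗ[k] A →ₗ[k] A)
    (c : G) (lam : k) (P : A →ₗ[k] A) : Prop :=
  (∀ a : G, ∀ x ∈ 𝒜 a, P x ∈ 𝒜 (a + c)) ∧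
  ∀ a b : G, ∀ x ∈ 𝒜 a, ∀ y ∈ 𝒜 b,
    μ (P x) (P y)
      = ε.ε (c + a) c • P (μ (P x) y) + P (μ x (P y)) + lam • P (μ x y)

/-- A nonzero homogeneous linear map `P` on the 2-dimensional proper
left-symmetric color algebra `A_α` over `ℂ` is a Nijenhuis operator (of some degree)
if and only if either `P = r·id` with `r ≠ 0`, or `P(x) = s·y` and `P(y) = 0` with
`s ≠ 0`; i.e. the homogeneous Nijenhuis operators correspond to the matrices
`(r, 0; s, r)` with `r·s = 0`. -/
theorem nijenhuis_operators_on_Aalpha {G : Type*} [AddCommGroup G] [DecidableEq G]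
    (a b : G) (hab : a + a = b) (hne : a ≠ b) (ha : a ≠ 0) (hb : b ≠ 0)
    (ε : Bicharacter G ℂ)
    {A : Type*} [AddCommGroup A] [Module ℂ A]
    (x y : A) (hind : LinearIndependent ℂ ![x, y])
    (hspan : Submodule.span ℂ {x, y} = ⊤)
    (𝒜 : G → Submodule ℂ A)
    (h𝒜a : 𝒜 a = Submodule.span ℂ {x}) (h𝒜b : 𝒜 b = Submodule.span ℂ {y})
    (h𝒜 : ∀ g : G, g ≠ a → g ≠ b → 𝒜 g = ⊥)
    (α : ℂ) (hα : α ≠ 0)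
    (μ : A →ₗ[ℂ] A →ₗ[ℂ] A)
    (hxx : μ x x = α • y) (hxy : μ x y = 0) (hyx : μ y x = 0) (hyy : μ y y = 0)
    (P : A →ₗ[ℂ] A) (hPne : P ≠ 0) :
    (∃ c : G, IsNijenhuisOp ε 𝒜 μ c P) ↔
      ((∃ r : ℂ, r ≠ 0 ∧ P = r • LinearMap.id) ∨
        (∃ s : ℂ, s ≠ 0 ∧ P x = s • y ∧ P y = 0)) := by

  -- Basic nonvanishing facts from linear independence.
  have hx0 : x ≠ 0 := by simpa using hind.ne_zero 0
  have hy0 : y ≠ 0 := by simpa using hind.ne_zero 1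
  have hcancel : ∀ c₁ c₂ : ℂ, c₁ • y = c₂ • y → c₁ = c₂ := by
    intro c₁ c₂ h
    exact smul_left_injective ℂ hy0 h
  have hxmem : x ∈ 𝒜 a := by rw [h𝒜a]; exact Submodule.mem_span_singleton_self x
  have hymem : y ∈ 𝒜 b := by rw [h𝒜b]; exact Submodule.mem_span_singleton_self y
  have hε0 : ∀ g : G, ε.ε g 0 = 1 := by
    intro g
    have h := ε.add_right g 0 0
    rw [add_zero] at h
    nth_rewrite 1 [← mul_one (ε.ε g 0)] at h
    exact (mul_left_cancel₀ (ε.ne_zero g 0) h).symm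
  have hPzero : P x = 0 → P y = 0 → False := by
    intro h1 h2
    apply hPne
    apply LinearMap.ext_on hspan
    intro z hz
    simp only [Set.mem_insert_iff, Set.mem_singleton_iff] at hz
    rcases hz with rfl | rfl
    · simpa using h1
    · simpa using h2
  constructor
  · rintro ⟨c, hhom, hnij⟩
    have hPx := hhom a x hxmem
    have hPy := hhom b y hymem
    by_cases hc0 : c = 0
    · -- degree 0 : P = r • id
      subst hc0
      rw [add_zero, h𝒜a] at hPx
      rw [add_zero, h𝒜b] at hPy
      obtain ⟨r, hr⟩ := Submodule.mem_span_singleton.mp hPx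
      obtain ⟨r', hr'⟩ := Submodule.mem_span_singleton.mp hPy
      have hr2 : P x = r • x := hr.symm
      have hr'2 : P y = r' • y := hr'.symm
      have key := hnij a a x hxmem x hxmem
      simp only [hr2, map_smul, LinearMap.smul_apply, hxx, hr'2, smul_smul,
        hε0, one_smul] at key
      have hco : r * (r * α) = r * (α * r') + r * (α * r') - α * (r' * r') := by
        apply hcancel
        rw [key]; module
      have hrr' : r = r' := by
        have h2 : α * (r - r') ^ 2 = 0 := by ring_nf; linear_combination hco
        have := mul_eq_zero.mp h2
        rcases this with h | h
        · exact absurd h hα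
        · have := pow_eq_zero_iff (n := 2) (by norm_num) |>.mp h
          exact sub_eq_zero.mp this
      left
      refine ⟨r, ?_, ?_⟩
      · intro h0
        subst h0
        apply hPzero <;> simp [hr2, hr'2, ← hrr']
      · apply LinearMap.ext_on hspan
        intro z hz
        simp only [Set.mem_insert_iff, Set.mem_singleton_iff] at hz
        rcases hz with rfl | rfl
        · simpa using hr2
        · rw [hr'2, ← hrr']; simp
    · by_cases hca : c = a
      · -- degree a : P x = s • y, P y = 0
        rw [hca, hab, h𝒜b] at hPx
        rw [hca] at hPy
        have hba1 : b + a ≠ a := fun h => hb (add_eq_right.mp h)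
        have hba2 : b + a ≠ b := fun h => ha (add_eq_left.mp h)
        rw [h𝒜 _ hba1 hba2] at hPy
        have hPy0 : P y = 0 := by simpa using hPy
        obtain ⟨s, hs⟩ := Submodule.mem_span_singleton.mp hPx
        have hs0 : s ≠ 0 := by
          intro h0
          apply hPzero _ hPy0
          rw [← hs, h0, zero_smul]
        exact Or.inr ⟨s, hs0, hs.symm, hPy0⟩
      · -- other degrees : contradiction
        have h1 : a + c ≠ a := fun h => hc0 (by simpa using h)
        have h2 : a + c ≠ b := by
          intro h
          apply hca
          have : a + c = a + a := by rw [h, hab]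
          exact add_left_cancel this
        rw [h𝒜 (a + c) h1 h2] at hPx
        have hPx0 : P x = 0 := by simpa using hPx
        have h3 : b + c ≠ b := fun h => hc0 (by simpa using h)
        have hPy0 : b + c ≠ a → False := by
          intro h4
          rw [h𝒜 (b + c) h4 h3] at hPy
          exact hPzero hPx0 (by simpa using hPy)
        by_cases h4 : b + c = a
        · rw [h4, h𝒜a] at hPy
          obtain ⟨t, ht⟩ := Submodule.mem_span_singleton.mp hPy
          have ht2 : P y = t • x := ht.symm
          have key := hnij b b y hymem y hymem
          simp only [ht2, map_smul, LinearMap.smul_apply, hxx, hxy, hyx, hyy,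
            smul_zero, map_zero, smul_smul, mul_zero, zero_sub, add_zero,
            neg_zero, sub_zero, zero_add] at key
          have hco : t * (t * α) = 0 := hcancel _ _ (by rw [key]; module)
          have ht0 : t = 0 := by
            rcases mul_eq_zero.mp hco with h | h
            · exact h
            · rcases mul_eq_zero.mp h with h | h
              · exact h
              · exact absurd h hα
          exact absurd (hPzero hPx0 (by rw [ht2, ht0, zero_smul])) (fun h => h)
        · exact absurd (hPy0 h4) (fun h => h)
  · rintro (⟨r, hr0, rfl⟩ | ⟨s, hs0, hPx, hPy⟩)
    · -- P = r • id, degree 0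
      refine ⟨0, ?_, ?_⟩
      · intro g u hu
        rw [add_zero]
        simpa using Submodule.smul_mem _ r hu
      · intro g1 g2 u _ v _
        simp only [LinearMap.smul_apply, LinearMap.id_apply, map_smul, hε0,
          one_smul, smul_smul]
        module
    · -- P x = s • y, P y = 0, degree a
      have hPy' : ∀ u : A, P u ∈ Submodule.span ℂ {y} := by
        intro u
        have hle : (⊤ : Submodule ℂ A) ≤ Submodule.comap P (Submodule.span ℂ {y}) := by
          rw [← hspan]
          apply Submodule.span_le.mpr
          intro z hz
          simp only [Set.mem_insert_iff, Set.mem_singleton_iff] at hz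
          rcases hz with rfl | rfl
          · simp only [SetLike.mem_coe, Submodule.mem_comap, hPx]
            exact Submodule.smul_mem _ s (Submodule.mem_span_singleton_self y)
          · simp only [SetLike.mem_coe, Submodule.mem_comap, hPy]
            exact Submodule.zero_mem _
        exact hle Submodule.mem_top
      have hμy : ∀ u : A, μ y u = 0 := by
        intro u
        have : μ y = 0 := by
          apply LinearMap.ext_on hspan
          intro z hz
          simp only [Set.mem_insert_iff, Set.mem_singleton_iff] at hz
          rcases hz with rfl | rfl
          · simpa using hyx
          · simpa using hyy
        simp [this]
      have hμ'y : ∀ u : A, μ u y = 0 := by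
        intro u
        have : μ.flip y = 0 := by
          apply LinearMap.ext_on hspan
          intro z hz
          simp only [Set.mem_insert_iff, Set.mem_singleton_iff] at hz
          rcases hz with rfl | rfl
          · simpa using hxy
          · simpa using hyy
        have := LinearMap.congr_fun this u
        simpa using this
      have hμP : ∀ u v : A, μ (P u) v = 0 := by
        intro u v
        obtain ⟨k, hk⟩ := Submodule.mem_span_singleton.mp (hPy' u)
        rw [← hk, map_smul, LinearMap.smul_apply, hμy, smul_zero]
      have hμP' : ∀ u v : A, μ u (P v) = 0 := by
        intro u v
        obtain ⟨k, hk⟩ := Submodule.mem_span_singleton.mp (hPy' v)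
        rw [← hk, map_smul, hμ'y, smul_zero]
      have hPP : ∀ u : A, P (P u) = 0 := by
        intro u
        obtain ⟨k, hk⟩ := Submodule.mem_span_singleton.mp (hPy' u)
        rw [← hk, map_smul, hPy, smul_zero]
      refine ⟨a, ?_, ?_⟩
      · intro g u hu
        by_cases hg : g = a
        · subst hg
          rw [h𝒜a] at hu
          obtain ⟨k, hk⟩ := Submodule.mem_span_singleton.mp hu
          rw [← hk, map_smul, hPx, hab, h𝒜b]
          exact Submodule.smul_mem _ _ (Submodule.smul_mem _ _
            (Submodule.mem_span_singleton_self y))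
        · by_cases hg' : g = b
          · subst hg'
            rw [h𝒜b] at hu
            obtain ⟨k, hk⟩ := Submodule.mem_span_singleton.mp hu
            rw [← hk, map_smul, hPy, smul_zero]
            exact Submodule.zero_mem _
          · rw [h𝒜 g hg hg'] at hu
            simp only [Submodule.mem_bot] at hu
            subst hu
            rw [map_zero]
            exact Submodule.zero_mem _
      · intro g1 g2 u _ v _
        rw [hμP u (P v), hμP u v, hμP' u v, hPP (μ u v)]
        simp
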